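/- arXiv:1001.0448 — 2 statements merged into one kernel-verified Lean document; each statement's English description precedes it below -/
import Mathlib

section
/- Let k be a totally ordered tropical semifield and M a finitely generated pre-reflexive k-module with basis {e₁,…,eₙ}; let β : kⁿ → M be the surjective homomorphism sending the i-th standard basis element to e_i. Suppose that each e_i has a dual element η_i ∈ M∨. Then: (1) M is straight; (2) the homomorphism α : M → kⁿ defined by α(v) = (⟨v,η₁⟩,…,⟨v,ηₙ⟩) satisfies β ∘ α = id_M; (3) α is the unique right-inversion of β. -/
/-! # Tropical semifields and tropical modules -/

/-- A tropical semifield: a commutative semiring with idempotent addition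
(`⊕` is `+`, `⊙` is `*`, the zero element `−∞` is `0`, the unity is `1`)
in which every nonzero element has a multiplicative inverse. -/
class TropSemifield (k : Type*) extends CommSemiring k where
  add_idem : ∀ a : k, a + a = a
  exists_inv : ∀ a : k, a ≠ 0 → ∃ b : k, a * b = 1

/-- A tropical semigroup: commutative idempotent monoid, written additively
(the zero element is `−∞`). -/
class TropSemigroup (M : Type*) extends AddCommMonoid M where
  add_idem : ∀ v : M, v + v = v

/-- A module over a tropical semifield. -/
class TropModule (k : Type*) (M : Type*) [TropSemifield k] [TropSemigroup M] extends
    SMul k M where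
  mul_smul : ∀ (a b : k) (v : M), (a * b) • v = a • b • v
  one_smul : ∀ v : M, (1 : k) • v = v
  add_smul : ∀ (a b : k) (v : M), (a + b) • v = a • v + b • v
  smul_add : ∀ (a : k) (v w : M), a • (v + w) = a • v + a • w
  zero_smul : ∀ v : M, (0 : k) • v = 0
  smul_zero : ∀ a : k, a • (0 : M) = 0

/-- The canonical partial order `v ≤ w ↔ v ⊕ w = w`. -/
def tle {M : Type*} [Add M] (v w : M) : Prop := v + w = w

/-- Strict version of the canonical order. -/
def tlt {M : Type*} [Add M] (v w : M) : Prop := tle v w ∧ v ≠ w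

/-- The canonical order of `k` is total. -/
def TotallyOrderedTSF (k : Type*) [TropSemifield k] : Prop :=
  ∀ a b : k, tle a b ∨ tle b a

/-- Every nonempty subset of `k` admits an infimum. -/
def QuasiCompleteTSF (k : Type*) [TropSemifield k] : Prop :=
  ∀ S : Set k, S.Nonempty →
    ∃ c : k, (∀ x ∈ S, tle c x) ∧ ∀ d : k, (∀ x ∈ S, tle d x) → tle d c

/-- `k` is rational: `m`-th roots exist and `k` has no maximum element. -/
def RationalTSF (k : Type*) [TropSemifield k] : Prop :=
  (∀ (a : k) (m : ℕ), m ≠ 0 → ∃ b : k, b ^ m = a) ∧ ∀ a : k, ∃ b : k, tlt a b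

instance (priority := 100) TropSemifield.toTropSemigroup (k : Type*) [TropSemifield k] :
    TropSemigroup k :=
  { (inferInstance : AddCommMonoid k) with add_idem := TropSemifield.add_idem }

instance TropModule.self (k : Type*) [TropSemifield k] : TropModule k k :=
  { (inferInstance : SMul k k) with
    mul_smul := fun a b v => mul_assoc a b v
    one_smul := fun v => one_mul v
    add_smul := fun a b v => add_mul a b v
    smul_add := fun a v w => mul_add a v w
    zero_smul := fun v => zero_mul v
    smul_zero := fun a => mul_zero a }

instance TropSemigroup.pi {ι : Type*} (M : Type*) [TropSemigroup M] :
    TropSemigroup (ι → M) :=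
  { Pi.addCommMonoid with add_idem := fun v => funext fun i => TropSemigroup.add_idem (v i) }

instance TropModule.pi (k : Type*) {ι : Type*} (M : Type*) [TropSemifield k] [TropSemigroup M]
    [TropModule k M] : TropModule k (ι → M) where
  smul a v := fun i => a • v i
  mul_smul a b v := funext fun i => TropModule.mul_smul a b (v i)
  one_smul v := funext fun i => TropModule.one_smul (v i)
  add_smul a b v := funext fun i => TropModule.add_smul a b (v i)
  smul_add a v w := funext fun i => TropModule.smul_add a (v i) (w i)
  zero_smul v := funext fun i => TropModule.zero_smul (v i)
  smul_zero a := funext fun i => TropModule.smul_zero (a := a)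

/-! ## Homomorphisms of tropical modules -/

/-- A homomorphism of `k`-modules. -/
structure TropHom (k : Type*) (M : Type*) (N : Type*) [TropSemifield k] [TropSemigroup M]
    [TropModule k M] [TropSemigroup N] [TropModule k N] where
  toFun : M → N
  map_zero' : toFun 0 = 0
  map_add' : ∀ v w : M, toFun (v + w) = toFun v + toFun w
  map_smul' : ∀ (a : k) (v : M), toFun (a • v) = a • toFun v

namespace TropHom

variable {k M N : Type*} [TropSemifield k] [TropSemigroup M] [TropModule k M]
  [TropSemigroup N] [TropModule k N]

theorem ext' {f g : TropHom k M N} (h : ∀ v, f.toFun v = g.toFun v) : f = g := by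
  cases f; cases g
  simp only [mk.injEq]
  exact funext h

instance : Zero (TropHom k M N) :=
  ⟨⟨fun _ => 0, rfl, fun _ _ => (add_zero (0 : N)).symm,
    fun a _ => (TropModule.smul_zero (M := N) a).symm⟩⟩

instance : Add (TropHom k M N) :=
  ⟨fun f g =>
    { toFun := fun v => f.toFun v + g.toFun v
      map_zero' := by
        show f.toFun 0 + g.toFun 0 = 0
        rw [f.map_zero', g.map_zero', add_zero]
      map_add' := fun v w => by
        show f.toFun (v + w) + g.toFun (v + w) =
          (f.toFun v + g.toFun v) + (f.toFun w + g.toFun w)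
        rw [f.map_add', g.map_add', add_add_add_comm]
      map_smul' := fun a v => by
        show f.toFun (a • v) + g.toFun (a • v) = a • (f.toFun v + g.toFun v)
        rw [f.map_smul', g.map_smul', TropModule.smul_add] }⟩

instance : SMul k (TropHom k M N) :=
  ⟨fun a f =>
    { toFun := fun v => a • f.toFun v
      map_zero' := by
        show a • f.toFun 0 = 0
        rw [f.map_zero', TropModule.smul_zero]
      map_add' := fun v w => by
        show a • f.toFun (v + w) = a • f.toFun v + a • f.toFun w
        rw [f.map_add', TropModule.smul_add]
      map_smul' := fun b v => by
        show a • f.toFun (b • v) = b • (a • f.toFun v)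
        rw [f.map_smul', ← TropModule.mul_smul, ← TropModule.mul_smul, mul_comm a b] }⟩

instance : TropSemigroup (TropHom k M N) where
  add := (· + ·)
  zero := 0
  add_assoc f g h := ext' fun v => add_assoc (f.toFun v) (g.toFun v) (h.toFun v)
  zero_add f := ext' fun v => zero_add (f.toFun v)
  add_zero f := ext' fun v => add_zero (f.toFun v)
  add_comm f g := ext' fun v => add_comm (f.toFun v) (g.toFun v)
  nsmul := nsmulRec
  add_idem f := ext' fun v => TropSemigroup.add_idem (f.toFun v)

instance : TropModule k (TropHom k M N) where
  smul := (· • ·)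
  mul_smul a b f := ext' fun v => TropModule.mul_smul a b (f.toFun v)
  one_smul f := ext' fun v => TropModule.one_smul (f.toFun v)
  add_smul a b f := ext' fun v => TropModule.add_smul a b (f.toFun v)
  smul_add a f g := ext' fun v => TropModule.smul_add a (f.toFun v) (g.toFun v)
  zero_smul f := ext' fun v => TropModule.zero_smul (f.toFun v)
  smul_zero a := ext' fun v => TropModule.smul_zero (M := N) a

end TropHom

/-- The canonical map `M → (M∨)∨`, `v ↦ (ξ ↦ ⟨v, ξ⟩)`. -/
def iotaFun (k : Type*) (M : Type*) [TropSemifield k] [TropSemigroup M] [TropModule k M] :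
    M → TropHom k (TropHom k M k) k :=
  fun v => ⟨fun ξ => ξ.toFun v, rfl, fun ξ η => rfl, fun a ξ => rfl⟩

/-! ## Order-theoretic notions -/

/-- `z` is the infimum of `v` and `w` w.r.t. the canonical order. -/
def IsTInf {M : Type*} [Add M] (v w z : M) : Prop :=
  tle z v ∧ tle z w ∧ ∀ y : M, tle y v → tle y w → tle y z

/-- A tropical module is straight if it is a finitely distributive ordered lattice. -/
def Straight (M : Type*) [Add M] : Prop :=
  (∀ v w : M, ∃ z : M, IsTInf v w z) ∧
    ∀ v₁ v₂ w z₁ z₂ : M, IsTInf v₁ w z₁ → IsTInf v₂ w z₂ → IsTInf (v₁ + v₂) w (z₁ + z₂)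

/-- Infimum of `v` and `w` within the subset `N`. -/
def IsTInfOn {M : Type*} [Add M] (N : Set M) (v w z : M) : Prop :=
  tle z v ∧ tle z w ∧ ∀ y ∈ N, tle y v → tle y w → tle y z

/-- A submodule (viewed as a subset) is straight. -/
def StraightSet {M : Type*} [Add M] (N : Set M) : Prop :=
  (∀ v ∈ N, ∀ w ∈ N, ∃ z ∈ N, IsTInfOn N v w z) ∧
    ∀ v₁ ∈ N, ∀ v₂ ∈ N, ∀ w ∈ N, ∀ z₁ ∈ N, ∀ z₂ ∈ N,
      IsTInfOn N v₁ w z₁ → IsTInfOn N v₂ w z₂ → IsTInfOn N (v₁ + v₂) w (z₁ + z₂)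

/-! ## Generation, bases, extremal elements -/

/-- `S` generates the `k`-module `M`. -/
def TGenerates (k : Type*) {M : Type*} [TropSemifield k] [TropSemigroup M] [TropModule k M]
    (S : Set M) : Prop :=
  ∀ v : M, ∃ (r : ℕ) (a : Fin r → k) (x : Fin r → M), (∀ i, x i ∈ S) ∧ v = ∑ i, a i • x i

/-- `M` is finitely generated. -/
def TFG (k : Type*) (M : Type*) [TropSemifield k] [TropSemigroup M] [TropModule k M] : Prop :=
  ∃ S : Finset M, TGenerates k (↑S : Set M)

/-- A basis: a generating set no proper subset of which generates. -/
def TBasis (k : Type*) {M : Type*} [TropSemifield k] [TropSemigroup M] [TropModule k M]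
    (S : Set M) : Prop :=
  TGenerates k S ∧ ∀ T : Set M, T ⊂ S → ¬ TGenerates k T

/-- `S` generates the subset `N` (viewed as a submodule of `M`). -/
def TGeneratesOn (k : Type*) {M : Type*} [TropSemifield k] [TropSemigroup M] [TropModule k M]
    (N S : Set M) : Prop :=
  ∀ v ∈ N, ∃ (r : ℕ) (a : Fin r → k) (x : Fin r → M), (∀ i, x i ∈ S) ∧ v = ∑ i, a i • x i

/-- A basis of the submodule `N ⊆ M`. -/
def TBasisOn (k : Type*) {M : Type*} [TropSemifield k] [TropSemigroup M] [TropModule k M]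
    (N S : Set M) : Prop :=
  S ⊆ N ∧ TGeneratesOn k N S ∧ ∀ T : Set M, T ⊂ S → ¬ TGeneratesOn k N T

/-- An extremal element. -/
def TExtremal {M : Type*} [Add M] [Zero M] (e : M) : Prop :=
  e ≠ 0 ∧ ∀ v w : M, v + w = e → v = e ∨ w = e

/-- The ray `k ⊙ e` generated by an element. -/
def tray (k : Type*) {M : Type*} [TropSemifield k] [TropSemigroup M] [TropModule k M]
    (e : M) : Set M :=
  Set.range fun a : k => a • e

/-- The set of extremal rays of `M`. -/
def extRays (k : Type*) (M : Type*) [TropSemifield k] [TropSemigroup M] [TropModule k M] :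
    Set (Set M) :=
  {R : Set M | ∃ e : M, TExtremal e ∧ R = tray k e}

/-- The dimension of a straight reflexive module: the number of extremal rays. -/
noncomputable def tdim (k : Type*) (M : Type*) [TropSemifield k] [TropSemigroup M]
    [TropModule k M] : ℕ :=
  (extRays k M).ncard

/-! ## Further notions on homomorphisms -/

/-- A lightly surjective homomorphism. -/
def LightlySurjective {k M N : Type*} [TropSemifield k] [TropSemigroup M] [TropModule k M]
    [TropSemigroup N] [TropModule k N] (α : TropHom k M N) : Prop :=
  ∀ w : N, ∃ v : M, tle w (α.toFun v)

/-- A lattice-preserving homomorphism. -/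
def LatticePreserving {k M N : Type*} [TropSemifield k] [TropSemigroup M] [TropModule k M]
    [TropSemigroup N] [TropModule k N] (α : TropHom k M N) : Prop :=
  ∀ v w : M, ∀ x : N, tle x (α.toFun v) → tle x (α.toFun w) →
    ∃ y : M, tle y v ∧ tle y w ∧ tle x (α.toFun y)

/-- The inclusion of the subset `N` into the ambient module is lattice-preserving. -/
def LatPresSet {M : Type*} [Add M] (N : Set M) : Prop :=
  ∀ v ∈ N, ∀ w ∈ N, ∀ x : M, tle x v → tle x w → ∃ y ∈ N, tle y v ∧ tle y w ∧ tle x y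

/-- `η` is the dual element of `e`: `⟨e,η⟩ = 0` and
`⟨v,η⟩ ⊙ ⟨e,ξ⟩ ≤ ⟨v,ξ⟩` for all `v`, `ξ`. -/
def IsDualElement {k M : Type*} [TropSemifield k] [TropSemigroup M] [TropModule k M]
    (e : M) (η : TropHom k M k) : Prop :=
  η.toFun e = 1 ∧ ∀ (v : M) (ξ : TropHom k M k), tle (η.toFun v * ξ.toFun e) (ξ.toFun v)

/-! ## Locators -/

/-- A locator of `M`: a lower-saturated subsemigroup of `(M, ⊕)` that generates `M`. -/
structure IsLocator (k : Type*) {M : Type*} [TropSemifield k] [TropSemigroup M] [TropModule k M]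
    (S : Set M) : Prop where
  lower : ∀ v w : M, tle v w → w ∈ S → v ∈ S
  add_mem : ∀ v ∈ S, ∀ w ∈ S, v + w ∈ S
  generates : TGenerates k S

/-- The multiplicative inverse `⊘a` (junk value `−∞` at `−∞`). -/
noncomputable def tinv {k : Type*} [TropSemifield k] (a : k) : k := by
  classical exact if h : a = 0 then 0 else Classical.choose (TropSemifield.exists_inv a h)

/-- Scalar multiplication on locators: `a ⊙̌ S = (⊘a) ⊙ S` for `a ≠ −∞`, `(−∞) ⊙̌ S = M`. -/
noncomputable def locSMul {k M : Type*} [TropSemifield k] [TropSemigroup M] [TropModule k M]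
    (a : k) (S : Set M) : Set M := by
  classical exact if a = 0 then Set.univ else (fun v => tinv a • v) '' S

/-- `U` is the infimum of the locators `S`, `T` in `Loc(M)` (whose canonical
order is reverse inclusion, the sum being intersection). -/
def IsLocInf (k : Type*) {M : Type*} [TropSemifield k] [TropSemigroup M] [TropModule k M]
    (S T U : Set M) : Prop :=
  IsLocator k U ∧ S ⊆ U ∧ T ⊆ U ∧
    ∀ W : Set M, IsLocator k W → S ⊆ W → T ⊆ W → U ⊆ W

/-! ## Submodules -/

/-- A subset of a `k`-module which is a submodule. -/
structure IsTSubmodule (k : Type*) {M : Type*} [TropSemifield k] [TropSemigroup M]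
    [TropModule k M] (N : Set M) : Prop where
  zero_mem : (0 : M) ∈ N
  add_mem : ∀ v ∈ N, ∀ w ∈ N, v + w ∈ N
  smul_mem : ∀ (a : k), ∀ v ∈ N, a • v ∈ N

/-- A bundled submodule of a `k`-module. -/
structure TSub (k : Type*) (M : Type*) [TropSemifield k] [TropSemigroup M] [TropModule k M] where
  carrier : Set M
  zero_mem : (0 : M) ∈ carrier
  add_mem : ∀ v ∈ carrier, ∀ w ∈ carrier, v + w ∈ carrier
  smul_mem : ∀ (a : k), ∀ v ∈ carrier, a • v ∈ carrier

instance TSub.instZero {k M : Type*} [TropSemifield k] [TropSemigroup M] [TropModule k M]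
    (N : TSub k M) : Zero ↥N.carrier :=
  ⟨⟨0, N.zero_mem⟩⟩

instance TSub.instAdd {k M : Type*} [TropSemifield k] [TropSemigroup M] [TropModule k M]
    (N : TSub k M) : Add ↥N.carrier :=
  ⟨fun v w => ⟨v.1 + w.1, N.add_mem v.1 v.2 w.1 w.2⟩⟩

instance TSub.instSMul {k M : Type*} [TropSemifield k] [TropSemigroup M] [TropModule k M]
    (N : TSub k M) : SMul k ↥N.carrier :=
  ⟨fun a v => ⟨a • v.1, N.smul_mem a v.1 v.2⟩⟩

instance TSub.semigroup {k M : Type*} [TropSemifield k] [TropSemigroup M] [TropModule k M]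
    (N : TSub k M) : TropSemigroup ↥N.carrier where
  add := (· + ·)
  zero := 0
  add_assoc a b c := Subtype.ext (add_assoc a.1 b.1 c.1)
  zero_add a := Subtype.ext (zero_add a.1)
  add_zero a := Subtype.ext (add_zero a.1)
  add_comm a b := Subtype.ext (add_comm a.1 b.1)
  nsmul := nsmulRec
  add_idem a := Subtype.ext (TropSemigroup.add_idem a.1)

instance TSub.module {k M : Type*} [TropSemifield k] [TropSemigroup M] [TropModule k M]
    (N : TSub k M) : TropModule k ↥N.carrier where
  smul := (· • ·)
  mul_smul a b v := Subtype.ext (TropModule.mul_smul a b v.1)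
  one_smul v := Subtype.ext (TropModule.one_smul v.1)
  add_smul a b v := Subtype.ext (TropModule.add_smul a b v.1)
  smul_add a v w := Subtype.ext (TropModule.smul_add a v.1 w.1)
  zero_smul v := Subtype.ext (TropModule.zero_smul v.1)
  smul_zero a := Subtype.ext (TropModule.smul_zero (M := M) a)

/-! ## Linear combinations -/

theorem tsmul_sum {k M : Type*} [TropSemifield k] [TropSemigroup M] [TropModule k M]
    (a : k) {ι : Type*} (s : Finset ι) (f : ι → M) :
    a • (∑ i ∈ s, f i) = ∑ i ∈ s, a • f i := by
  classical
  induction s using Finset.induction_on with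
  | empty => simpa using TropModule.smul_zero (M := M) a
  | insert _ _ h ih => rw [Finset.sum_insert h, Finset.sum_insert h, TropModule.smul_add, ih]

/-- The homomorphism `kⁿ → M` sending the `i`-th standard basis element to `e i`. -/
def linComb {k M : Type*} [TropSemifield k] [TropSemigroup M] [TropModule k M] {n : ℕ}
    (e : Fin n → M) : TropHom k (Fin n → k) M where
  toFun v := ∑ i, v i • e i
  map_zero' :=
    (Finset.sum_congr rfl fun i _ => TropModule.zero_smul (e i)).trans Finset.sum_const_zero
  map_add' v w := by
    rw [← Finset.sum_add_distrib]
    exact Finset.sum_congr rfl fun i _ => TropModule.add_smul (v i) (w i) (e i)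
  map_smul' a v := by
    rw [tsmul_sum]
    exact Finset.sum_congr rfl fun i _ => TropModule.mul_smul a (v i) (e i)

/-- The homomorphism `M → kⁿ` induced by an `n`-tuple of elements of `M∨`. -/
def dualTuple {k M : Type*} [TropSemifield k] [TropSemigroup M] [TropModule k M] {n : ℕ}
    (η : Fin n → TropHom k M k) : TropHom k M (Fin n → k) where
  toFun v := fun i => (η i).toFun v
  map_zero' := funext fun i => (η i).map_zero'
  map_add' v w := funext fun i => (η i).map_add' v w
  map_smul' a v := funext fun i => (η i).map_smul' a v

/-! The dual elements act as coordinate functionals. If `v = ∑ cᵢ • eᵢ`, then monotonicity of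
`ηᵢ` gives `cᵢ ≤ ⟨v, ηᵢ⟩`, while the defining inequality of `ηᵢ` tested against every
`ξ ∈ M∨` gives `⟨v, ηᵢ⟩ • eᵢ ≤ v` by pre-reflexivity; together `β ∘ α = id`.
A right inversion `α'` satisfies `α'(v)ᵢ ≤ ⟨v, ηᵢ⟩` for the same reason, and the reverse
inequality reduces to `1 ≤ α'(eᵢ)ᵢ`. Since `k` is totally ordered, the sum
`1 = ⟨eᵢ, ηᵢ⟩ = ∑ⱼ α'(eᵢ)ⱼ ⟨eⱼ, ηᵢ⟩` is attained by a single term; a term with `j ≠ i` would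
force `eᵢ = α'(eᵢ)ⱼ • eⱼ`, against the minimality of the basis.
Finally `M` is a retract of `kⁿ`, which is straight with the coordinatewise minimum, and
`β (min (α v) (α w))` is the infimum of `v` and `w`. -/

section Order

variable {M : Type*} [TropSemigroup M]

theorem tle_refl (v : M) : tle v v := TropSemigroup.add_idem v

theorem tle_trans {u v w : M} (huv : tle u v) (hvw : tle v w) : tle u w := by
  unfold tle at *
  rw [← hvw, ← add_assoc, huv]

theorem tle_antisymm {v w : M} (hvw : tle v w) (hwv : tle w v) : v = w := by
  unfold tle at *
  rw [← hwv, add_comm, hvw]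

theorem tle_add_left (v w : M) : tle v (v + w) := by
  unfold tle
  rw [← add_assoc, TropSemigroup.add_idem]

theorem add_tle {u v w : M} (hu : tle u w) (hv : tle v w) : tle (u + v) w := by
  unfold tle at *
  rw [add_assoc, hv, hu]

theorem zero_tle (v : M) : tle 0 v := zero_add v

theorem sum_tle {ι : Type*} {s : Finset ι} {f : ι → M} {w : M} (h : ∀ i ∈ s, tle (f i) w) :
    tle (∑ i ∈ s, f i) w := by
  classical
  induction s using Finset.induction_on with
  | empty => exact zero_tle w
  | insert a s ha ih =>
    rw [Finset.sum_insert ha]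
    exact add_tle (h a (Finset.mem_insert_self a s))
      (ih fun i hi => h i (Finset.mem_insert_of_mem hi))

theorem tle_sum {ι : Type*} {s : Finset ι} {f : ι → M} {j : ι} (hj : j ∈ s) :
    tle (f j) (∑ i ∈ s, f i) := by
  classical
  rw [← Finset.add_sum_erase s f hj]
  exact tle_add_left _ _

theorem tle_pi_iff {ι : Type*} {u v : ι → M} : tle u v ↔ ∀ i, tle (u i) (v i) :=
  funext_iff

theorem IsTInf.unique {v w z z' : M} (hz : IsTInf v w z) (hz' : IsTInf v w z') : z = z' :=
  tle_antisymm (hz'.2.2 z hz.1 hz.2.1) (hz.2.2 z' hz'.1 hz'.2.1)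

theorem isTInf_pi {ι : Type*} {v w z : ι → M} (h : ∀ i, IsTInf (v i) (w i) (z i)) :
    IsTInf v w z :=
  ⟨tle_pi_iff.2 fun i => (h i).1, tle_pi_iff.2 fun i => (h i).2.1,
    fun y hyv hyw => tle_pi_iff.2 fun i =>
      (h i).2.2 (y i) (tle_pi_iff.1 hyv i) (tle_pi_iff.1 hyw i)⟩

theorem Straight.of_inf (inf : M → M → M) (hinf : ∀ v w, IsTInf v w (inf v w))
    (hdist : ∀ v₁ v₂ w, inf (v₁ + v₂) w = inf v₁ w + inf v₂ w) : Straight M := by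
  refine ⟨fun v w => ⟨inf v w, hinf v w⟩, fun v₁ v₂ w z₁ z₂ h₁ h₂ => ?_⟩
  rw [h₁.unique (hinf v₁ w), h₂.unique (hinf v₂ w), ← hdist]
  exact hinf _ _

end Order

section Scalars

variable {k : Type*} [TropSemifield k]

theorem mul_tle_mul_left (c : k) {a b : k} (h : tle a b) : tle (c * a) (c * b) := by
  unfold tle at *
  rw [← mul_add, h]

noncomputable def tmin (a b : k) : k := by
  classical exact if tle a b then a else b

theorem isTInf_tmin (hto : TotallyOrderedTSF k) (a b : k) : IsTInf a b (tmin a b) := by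
  unfold tmin
  split_ifs with hab
  · exact ⟨tle_refl a, hab, fun _ hya _ => hya⟩
  · exact ⟨(hto a b).resolve_left hab, tle_refl b, fun _ _ hyb => hyb⟩

theorem tmin_mono_left (hto : TotallyOrderedTSF k) {a₁ a₂ : k} (b : k) (h : tle a₁ a₂) :
    tle (tmin a₁ b) (tmin a₂ b) :=
  (isTInf_tmin hto a₂ b).2.2 _ (tle_trans (isTInf_tmin hto a₁ b).1 h) (isTInf_tmin hto a₁ b).2.1

theorem tmin_add (hto : TotallyOrderedTSF k) (a₁ a₂ b : k) :
    tmin (a₁ + a₂) b = tmin a₁ b + tmin a₂ b := by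
  rcases hto a₁ a₂ with h | h
  · rw [h]
    exact (tmin_mono_left hto b h).symm
  · rw [add_comm a₁, h, add_comm]
    exact (tmin_mono_left hto b h).symm

theorem exists_sum_eq (hto : TotallyOrderedTSF k) {ι : Type*} {s : Finset ι} (hs : s.Nonempty)
    (f : ι → k) : ∃ j ∈ s, ∑ i ∈ s, f i = f j := by
  induction hs using Finset.Nonempty.cons_induction with
  | singleton a => exact ⟨a, Finset.mem_singleton_self a, Finset.sum_singleton f a⟩
  | cons a s ha _ ih =>
    obtain ⟨j, hj, hsum⟩ := ih
    rw [Finset.sum_cons, hsum]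
    rcases hto (f a) (f j) with h | h
    · exact ⟨j, Finset.mem_cons_of_mem hj, h⟩
    · exact ⟨a, Finset.mem_cons_self a s, add_comm (f a) (f j) ▸ h⟩

variable {M : Type*} [TropSemigroup M] [TropModule k M]

theorem sum_tsmul {ι : Type*} (s : Finset ι) (a : ι → k) (v : M) :
    (∑ i ∈ s, a i) • v = ∑ i ∈ s, a i • v := by
  classical
  induction s using Finset.induction_on with
  | empty => exact TropModule.zero_smul v
  | insert j s hj ih =>
    rw [Finset.sum_insert hj, Finset.sum_insert hj, TropModule.add_smul, ih]

end Scalars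

namespace TropHom

variable {k M N : Type*} [TropSemifield k] [TropSemigroup M] [TropModule k M]
  [TropSemigroup N] [TropModule k N]

theorem monotone (f : TropHom k M N) {v w : M} (h : tle v w) : tle (f.toFun v) (f.toFun w) := by
  unfold tle at *
  rw [← f.map_add', h]

theorem map_sum (f : TropHom k M N) {ι : Type*} (s : Finset ι) (g : ι → M) :
    f.toFun (∑ i ∈ s, g i) = ∑ i ∈ s, f.toFun (g i) := by
  classical
  induction s using Finset.induction_on with
  | empty => exact f.map_zero'
  | insert j s hj ih => rw [Finset.sum_insert hj, Finset.sum_insert hj, f.map_add', ih]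

def coord {ι : Type*} (f : TropHom k M (ι → k)) (i : ι) : TropHom k M k where
  toFun v := f.toFun v i
  map_zero' := congrFun f.map_zero' i
  map_add' v w := congrFun (f.map_add' v w) i
  map_smul' a v := congrFun (f.map_smul' a v) i

end TropHom

section Retract

variable {k M N : Type*} [TropSemifield k] [TropSemigroup M] [TropModule k M]
  [TropSemigroup N] [TropModule k N]

theorem isTInf_of_rightInverse (α : TropHom k M N) (β : TropHom k N M)
    (hβα : ∀ v, β.toFun (α.toFun v) = v) {v w : M} {z : N}
    (hz : IsTInf (α.toFun v) (α.toFun w) z) : IsTInf v w (β.toFun z) := by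
  refine ⟨hβα v ▸ β.monotone hz.1, hβα w ▸ β.monotone hz.2.1, fun y hyv hyw => ?_⟩
  rw [← hβα y]
  exact β.monotone (hz.2.2 _ (α.monotone hyv) (α.monotone hyw))

theorem straight_of_rightInverse (hto : TotallyOrderedTSF k) {ι : Type*}
    (α : TropHom k M (ι → k)) (β : TropHom k (ι → k) M) (hβα : ∀ v, β.toFun (α.toFun v) = v) :
    Straight M := by
  refine Straight.of_inf (fun v w => β.toFun fun i => tmin (α.toFun v i) (α.toFun w i))
    (fun v w => isTInf_of_rightInverse α β hβα (isTInf_pi fun i => isTInf_tmin hto _ _))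
    (fun v₁ v₂ w => ?_)
  rw [← β.map_add', α.map_add']
  exact congrArg β.toFun (funext fun i => tmin_add hto _ _ _)

end Retract

section Basis

variable {k M : Type*} [TropSemifield k] [TropSemigroup M] [TropModule k M] {n : ℕ}
  {e : Fin n → M}

theorem linComb_apply (c : Fin n → k) : (linComb e).toFun c = ∑ i, c i • e i := rfl

theorem linComb_surjective_of_generates (h : TGenerates k (Set.range e)) :
    Function.Surjective (linComb (k := k) e).toFun := by
  classical
  intro v
  obtain ⟨r, a, x, hx, rfl⟩ := h v
  choose σ hσ using hx
  refine ⟨fun j => ∑ t with σ t = j, a t, ?_⟩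
  calc ∑ j, (∑ t with σ t = j, a t) • e j
      = ∑ j, ∑ t with σ t = j, a t • e (σ t) := by
        refine Finset.sum_congr rfl fun j _ => ?_
        rw [sum_tsmul]
        exact Finset.sum_congr rfl fun t ht => by rw [(Finset.mem_filter.1 ht).2]
    _ = ∑ t, a t • x t := by
        rw [Finset.sum_fiberwise]
        exact Finset.sum_congr rfl fun t _ => by rw [hσ]

theorem TBasis.ne_smul (hbasis : TBasis k (Set.range e)) (hinj : Function.Injective e)
    {i j : Fin n} (hij : i ≠ j) (c : k) : e i ≠ c • e j := by
  classical
  intro heq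
  refine hbasis.2 (Set.range e \ {e i}) (Set.sdiff_singleton_ssubset.2 ⟨i, rfl⟩) fun v => ?_
  obtain ⟨d, rfl⟩ := linComb_surjective_of_generates hbasis.1 v
  refine ⟨n, fun l => if l = i then d i * c else d l, fun l => if l = i then e j else e l,
    fun l => ?_, (linComb_apply d).trans (Finset.sum_congr rfl fun l _ => ?_)⟩
  · dsimp only
    split_ifs with hl
    · exact ⟨⟨j, rfl⟩, fun h => hij (hinj h).symm⟩
    · exact ⟨⟨l, rfl⟩, fun h => hl (hinj h)⟩
  · dsimp only
    split_ifs with hl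
    · rw [hl, TropModule.mul_smul, ← heq]
    · rfl

end Basis

section Dual

variable {k M : Type*} [TropSemifield k] [TropSemigroup M] [TropModule k M]

theorem tle_of_forall_apply_tle (hpre : Function.Injective (iotaFun k M)) {u v : M}
    (h : ∀ ξ : TropHom k M k, tle (ξ.toFun u) (ξ.toFun v)) : tle u v :=
  hpre (TropHom.ext' fun ξ => (ξ.map_add' u v).trans (h ξ))

namespace IsDualElement

variable {e : M} {η : TropHom k M k}

theorem tle_apply_of_smul_tle (hd : IsDualElement e η) {a : k} {v : M} (h : tle (a • e) v) :
    tle a (η.toFun v) := by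
  have := η.monotone h
  rwa [η.map_smul', hd.1, smul_eq_mul, mul_one] at this

theorem apply_smul_tle (hpre : Function.Injective (iotaFun k M)) (hd : IsDualElement e η)
    (v : M) : tle (η.toFun v • e) v :=
  tle_of_forall_apply_tle hpre fun ξ => ξ.map_smul' _ e ▸ hd.2 v ξ

theorem tle_smul_of_mul_apply_eq_one (hpre : Function.Injective (iotaFun k M))
    (hd : IsDualElement e η) {c : k} {w : M} (h : c * η.toFun w = 1) : tle e (c • w) := by
  refine tle_of_forall_apply_tle hpre fun ξ => ?_
  have := mul_tle_mul_left c (hd.2 w ξ)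
  rwa [← mul_assoc, h, one_mul, ← smul_eq_mul, ← ξ.map_smul'] at this

end IsDualElement

variable {n : ℕ} {e : Fin n → M} {η : Fin n → TropHom k M k}

theorem tle_apply_of_linComb_eq (hdual : ∀ i, IsDualElement (e i) (η i)) {c : Fin n → k}
    {v : M} (h : (linComb e).toFun c = v) (i : Fin n) : tle (c i) ((η i).toFun v) :=
  (hdual i).tle_apply_of_smul_tle <| by
    rw [← h, linComb_apply c]
    exact tle_sum (f := fun l => c l • e l) (Finset.mem_univ i)

theorem linComb_dualTuple (hpre : Function.Injective (iotaFun k M))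
    (hgen : Function.Surjective (linComb (k := k) e).toFun)
    (hdual : ∀ i, IsDualElement (e i) (η i)) (v : M) :
    (linComb e).toFun ((dualTuple η).toFun v) = v := by
  refine tle_antisymm ?_ ?_
  · rw [linComb_apply]
    exact sum_tle fun i _ => (hdual i).apply_smul_tle hpre v
  · obtain ⟨c, rfl⟩ := hgen v
    exact (linComb e).monotone (tle_pi_iff.2 (tle_apply_of_linComb_eq hdual rfl))

variable (hto : TotallyOrderedTSF k) (hpre : Function.Injective (iotaFun k M))
  (hbasis : TBasis k (Set.range e)) (hinj : Function.Injective e)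
  (hdual : ∀ i, IsDualElement (e i) (η i))
  {α' : TropHom k M (Fin n → k)} (hα' : ∀ v, (linComb e).toFun (α'.toFun v) = v)
include hto hpre hbasis hinj hdual hα'

theorem one_tle_rightInverse_apply_self (i : Fin n) : tle 1 (α'.toFun (e i) i) := by
  set c := α'.toFun (e i)
  have hc : (linComb e).toFun c = e i := hα' (e i)
  have hsum : (η i).toFun (e i) = ∑ j, c j * (η i).toFun (e j) := by
    conv_lhs => rw [← hc, linComb_apply]
    exact ((η i).map_sum _ _).trans (Finset.sum_congr rfl fun j _ => (η i).map_smul' _ _)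
  obtain ⟨j, -, hj⟩ := exists_sum_eq hto ⟨i, Finset.mem_univ i⟩ fun j => c j * (η i).toFun (e j)
  rw [← hsum, (hdual i).1] at hj
  by_cases hji : j = i
  · subst hji
    rw [hj, (hdual j).1, mul_one]
    exact tle_refl _
  · have hle : tle (e i) (c j • e j) := (hdual i).tle_smul_of_mul_apply_eq_one hpre hj.symm
    have hge : tle (c j • e j) (e i) := by
      rw [← hc, linComb_apply c]
      exact tle_sum (f := fun l => c l • e l) (Finset.mem_univ j)
    exact absurd (tle_antisymm hle hge) (hbasis.ne_smul hinj (Ne.symm hji) (c j))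

theorem eq_dualTuple_of_rightInverse : α' = dualTuple η := by
  refine TropHom.ext' fun v => funext fun i => tle_antisymm
    (tle_apply_of_linComb_eq hdual (hα' v) i) ?_
  have := mul_tle_mul_left ((η i).toFun v)
    (one_tle_rightInverse_apply_self hto hpre hbasis hinj hdual hα' i)
  rw [mul_one] at this
  exact tle_trans this ((hdual i).2 v (α'.coord i))

end Dual

theorem stmt15 {k M : Type*} [TropSemifield k] [TropSemigroup M] [TropModule k M]
    (hto : TotallyOrderedTSF k) (hpre : Function.Injective (iotaFun k M))
    {n : ℕ} (e : Fin n → M) (hinj : Function.Injective e)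
    (hbasis : TBasis k (Set.range e))
    (η : Fin n → TropHom k M k) (hdual : ∀ i, IsDualElement (e i) (η i)) :
    Straight M ∧ (∀ v : M, (linComb e).toFun ((dualTuple η).toFun v) = v) ∧
    ∀ α' : TropHom k M (Fin n → k), (∀ v : M, (linComb e).toFun (α'.toFun v) = v) →
      α' = dualTuple η := by
  have hid := linComb_dualTuple hpre (linComb_surjective_of_generates hbasis.1) hdual
  exact ⟨straight_of_rightInverse hto (dualTuple η) (linComb e) hid, hid,
    fun _ hα' => eq_dualTuple_of_rightInverse hto hpre hbasis hinj hdual hα'⟩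
end

section
/- Let k be a totally ordered rational tropical semifield and A an n×n matrix over k. Then at least one of the following holds: (i) there exist a vector v ∈ (k∖{−∞})ⁿ and an element ε ∈ k with ε > 0 such that (A ⊕ ε⊙Δ̄(A)) ⊙ v = Δ(A) ⊙ v; (ii) there exists a vector v ∈ kⁿ with v ≠ (−∞,…,−∞) such that A ⊙ v = Δ̄(A) ⊙ v. -/
/-- The diagonal part `Δ(A)` of a square matrix. -/
def diagPart {k : Type*} [TropSemifield k] {n : ℕ} (A : Matrix (Fin n) (Fin n) k) :
    Matrix (Fin n) (Fin n) k :=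
  Matrix.of fun i j => if i = j then A i j else 0

/-- The off-diagonal part `Δ̄(A)` of a square matrix. -/
def offDiagPart {k : Type*} [TropSemifield k] {n : ℕ} (A : Matrix (Fin n) (Fin n) k) :
    Matrix (Fin n) (Fin n) k :=
  Matrix.of fun i j => if i = j then 0 else A i j

/-! The canonical order makes `k` an idempotent semiring. Dividing each row of `A` by its
diagonal entry turns the alternative into one for the off-diagonal matrix `B`: either
`ε B v ≤ v` for some `ε > 1` and some `v` without zero entries, or `v ≤ B v` for some `v ≠ 0`.
This is proved by induction on `n`, eliminating the last index `L`. If `B_LL ≥ 1`, the basis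
vector `e_L` works. Otherwise pass to `B'_ij = B_ij ⊕ B_iL B_Lj`, which accounts for all paths
through `L`; a solution for `B'` extends by a suitable last coordinate, after shrinking `ε` to a
square root so that `ε² ≤ ε'` and `ε B_LL ≤ 1`. A zero diagonal entry `A_ii` gives (ii) with `e_i`.
-/

open Matrix

theorem Finset.sum_le_iff_forall_le {ι α : Type*} [IdemSemiring α] {s : Finset ι} {f : ι → α}
    {c : α} : ∑ i ∈ s, f i ≤ c ↔ ∀ i ∈ s, f i ≤ c :=
  ⟨fun h _ hi => (Finset.single_le_sum (fun _ _ => zero_le) hi).trans h,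
    fun h => Finset.sum_induction f (· ≤ c) (fun _ _ => add_le) zero_le h⟩

namespace Matrix

variable {m n α : Type*} [Fintype n] [IdemSemiring α]

theorem mulVec_le_iff {M : Matrix m n α} {v : n → α} {w : m → α} :
    M *ᵥ v ≤ w ↔ ∀ i j, M i j * v j ≤ w i :=
  forall_congr' fun _ => by simp [mulVec, dotProduct, Finset.sum_le_iff_forall_le]

theorem mulVec_mono (M : Matrix m n α) : Monotone (M *ᵥ ·) :=
  fun _ _ h _ => Finset.sum_le_sum fun j _ => mul_le_mul_right (h j) _

theorem mulVec_snoc {l : ℕ} (M : Matrix m (Fin (l + 1)) α) (v : Fin l → α) (x : α) (i : m) :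
    (M *ᵥ Fin.snoc v x) i = ∑ j, M i j.castSucc * v j + M i (Fin.last l) * x := by
  simp [mulVec, dotProduct, Fin.sum_univ_castSucc]

end Matrix

-- Not a global instance: it would add a second path from `TropSemifield k` to `CommSemiring k`.
abbrev TropSemifield.toIdemCommSemiring (k : Type*) [TropSemifield k] : IdemCommSemiring k where
  le := tle
  lt := tlt
  le_refl := TropSemifield.add_idem
  le_trans a b c hab hbc := by unfold tle at *; rw [← hbc, ← add_assoc, hab]
  lt_iff_le_not_ge a b := by
    refine ⟨fun ⟨hab, hne⟩ => ⟨hab, fun hba => hne ?_⟩, fun ⟨hab, hba⟩ => ⟨hab, ?_⟩⟩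
    · unfold tle at *; rw [← hab, add_comm, hba]
    · rintro rfl; exact hba (TropSemifield.add_idem a)
  le_antisymm a b hab hba := by unfold tle at *; rw [← hab, add_comm, hba]
  sup := (· + ·)
  le_sup_left a b := by
    show a + (a + b) = a + b; rw [← add_assoc, TropSemifield.add_idem]
  le_sup_right a b := by
    show b + (a + b) = a + b; rw [add_comm a, ← add_assoc, TropSemifield.add_idem]
  sup_le a b c hac hbc := by show (a + b) + c = c; rw [add_assoc, hbc, hac]
  add_eq_sup _ _ := rfl
  bot := 0
  bot_le := zero_add

section Tropical

attribute [local instance] TropSemifield.toIdemCommSemiring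

section Order

variable {k : Type*} [TropSemifield k]

theorem TotallyOrderedTSF.lt_of_not_ge (hto : TotallyOrderedTSF k) {a b : k} (h : ¬ b ≤ a) :
    a < b :=
  lt_of_le_not_ge ((hto a b).resolve_right h) h

theorem RationalTSF.nontrivial (hrat : RationalTSF k) : Nontrivial k :=
  let ⟨b, hb⟩ := hrat.2 0
  ⟨⟨0, b, hb.2⟩⟩

theorem mul_tinv_cancel {a : k} (ha : a ≠ 0) : a * tinv a = 1 := by
  rw [tinv, dif_neg ha]
  exact Classical.choose_spec (TropSemifield.exists_inv a ha)

theorem tinv_ne_zero [Nontrivial k] {a : k} (ha : a ≠ 0) : tinv a ≠ 0 := fun h =>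
  one_ne_zero (by rw [← mul_tinv_cancel ha, h, mul_zero])

theorem one_lt_tinv (hto : TotallyOrderedTSF k) {c : k} (hc0 : c ≠ 0) (hc : c < 1) :
    1 < tinv c :=
  hto.lt_of_not_ge fun h => hc.not_ge <| by
    simpa [mul_tinv_cancel hc0] using mul_le_mul_right h c

theorem exists_one_lt_mul_self_eq (hto : TotallyOrderedTSF k) (hrat : RationalTSF k) {a : k}
    (ha : 1 < a) : ∃ b, 1 < b ∧ b * b = a := by
  obtain ⟨b, hb⟩ := hrat.1 a 2 two_ne_zero
  refine ⟨b, hto.lt_of_not_ge fun hb1 => ha.not_ge ?_, by rw [← hb, sq]⟩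
  calc a = b * b := by rw [← hb, sq]
    _ ≤ 1 * 1 := mul_le_mul' hb1 hb1
    _ = 1 := one_mul 1

theorem exists_one_lt_mul_self_le (hto : TotallyOrderedTSF k) (hrat : RationalTSF k) {a c : k}
    (ha : 1 < a) (hc : c < 1) : ∃ ε, 1 < ε ∧ ε * ε ≤ a ∧ ε * c ≤ 1 := by
  obtain ⟨ρ, hρ, hρa, hρc⟩ : ∃ ρ, 1 < ρ ∧ ρ ≤ a ∧ ρ * c ≤ 1 := by
    by_cases hc0 : c = 0
    · exact ⟨a, ha, le_rfl, by simp [hc0]⟩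
    rcases hto a (tinv c) with h | h
    · exact ⟨a, ha, le_rfl, (mul_le_mul_left h c).trans (by rw [mul_comm, mul_tinv_cancel hc0])⟩
    · exact ⟨tinv c, one_lt_tinv hto hc0 hc, h, by rw [mul_comm, mul_tinv_cancel hc0]⟩
  obtain ⟨ε, hε, rfl⟩ := exists_one_lt_mul_self_eq hto hrat hρ
  have hεε : ε ≤ ε * ε := le_mul_of_one_le_right' hε.le
  exact ⟨ε, hε, hρa, (mul_le_mul_left hεε c).trans hρc⟩

theorem exists_ne_zero_mul_le [Nontrivial k] {ι : Type*} [Fintype ι] (a b : ι → k)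
    (hb : ∀ i, b i ≠ 0) : ∃ s ≠ 0, ∀ i, a i * s ≤ b i := by
  set c := 1 + ∑ i, a i * tinv (b i)
  have hc : c ≠ 0 := ne_bot_of_le_ne_bot one_ne_zero le_self_add
  refine ⟨tinv c, tinv_ne_zero hc, fun i => ?_⟩
  have hi : a i * tinv (b i) ≤ c :=
    (Finset.single_le_sum (f := fun i => a i * tinv (b i)) (fun _ _ => zero_le)
      (Finset.mem_univ i)).trans le_add_self
  calc a i * tinv c = a i * tinv (b i) * tinv c * b i := by
        rw [mul_right_comm _ _ (b i), mul_assoc (a i), mul_comm (tinv _), mul_tinv_cancel (hb i),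
          mul_one]
    _ ≤ c * tinv c * b i := by gcongr
    _ = b i := by rw [mul_tinv_cancel hc, one_mul]

end Order

section Elimination

variable {k : Type*} [TropSemifield k] {n : ℕ}

def elimLast (B : Matrix (Fin (n + 1)) (Fin (n + 1)) k) : Matrix (Fin n) (Fin n) k :=
  Matrix.of fun i j =>
    B i.castSucc j.castSucc + B i.castSucc (Fin.last n) * B (Fin.last n) j.castSucc

theorem elimLast_mulVec (B : Matrix (Fin (n + 1)) (Fin (n + 1)) k) (v : Fin n → k)
    (i : Fin n) :
    (elimLast B *ᵥ v) i =
      (B *ᵥ Fin.snoc v (∑ j, B (Fin.last n) j.castSucc * v j)) i.castSucc := by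
  rw [mulVec_snoc]
  simp [elimLast, mulVec, dotProduct, add_mul, Finset.sum_add_distrib, Finset.mul_sum, mul_assoc]

theorem le_mulVec_snoc_of_le_elimLast_mulVec {B : Matrix (Fin (n + 1)) (Fin (n + 1)) k}
    {v : Fin n → k} (h : v ≤ elimLast B *ᵥ v) :
    Fin.snoc v (∑ j, B (Fin.last n) j.castSucc * v j) ≤
      B *ᵥ Fin.snoc v (∑ j, B (Fin.last n) j.castSucc * v j) := by
  intro i
  induction i using Fin.lastCases with
  | last => rw [Fin.snoc_last, mulVec_snoc]; exact le_self_add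
  | cast i => rw [Fin.snoc_castSucc, ← elimLast_mulVec]; exact h i

theorem smul_mulVec_snoc_le {B : Matrix (Fin (n + 1)) (Fin (n + 1)) k} {v : Fin n → k}
    {ε ε' s : k} (hε : 1 ≤ ε) (hεε' : ε * ε ≤ ε') (hlast : ε * B (Fin.last n) (Fin.last n) ≤ 1)
    (hs : ∀ i, ε * B i.castSucc (Fin.last n) * s ≤ v i) (h : (ε' • elimLast B) *ᵥ v ≤ v) :
    (ε • B) *ᵥ Fin.snoc v (s + ∑ j, ε * B (Fin.last n) j.castSucc * v j) ≤
      Fin.snoc v (s + ∑ j, ε * B (Fin.last n) j.castSucc * v j) := by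
  set x := s + ∑ j, ε * B (Fin.last n) j.castSucc * v j
  simp only [mulVec_le_iff, Matrix.smul_apply, smul_eq_mul] at h ⊢
  have hε_le : ε ≤ ε' := (le_mul_of_one_le_right' hε).trans hεε'
  have h_elim : ∀ i j, ε * ε * (B i.castSucc (Fin.last n) * B (Fin.last n) j.castSucc) * v j ≤
      v i := fun i j => (h i j).trans' <| by
    gcongr
    exact le_add_self
  intro i j
  induction i using Fin.lastCases with
  | last =>
    induction j using Fin.lastCases with
    | last =>
      simp only [Fin.snoc_last]
      simpa using mul_le_mul_left hlast x
    | cast j =>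
      simp only [Fin.snoc_last, Fin.snoc_castSucc]
      exact (Finset.single_le_sum (f := fun j => ε * B (Fin.last n) j.castSucc * v j)
        (fun _ _ => zero_le) (Finset.mem_univ j)).trans le_add_self
  | cast i =>
    induction j using Fin.lastCases with
    | last =>
      simp only [Fin.snoc_last, Fin.snoc_castSucc, x, mul_add, Finset.mul_sum]
      refine add_le (hs i) (Finset.sum_le_iff_forall_le.2 fun j _ => ?_)
      calc ε * B i.castSucc (Fin.last n) * (ε * B (Fin.last n) j.castSucc * v j)
          = ε * ε * (B i.castSucc (Fin.last n) * B (Fin.last n) j.castSucc) * v j := by ring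
        _ ≤ v i := h_elim i j
    | cast j =>
      simp only [Fin.snoc_castSucc]
      refine (h i j).trans' ?_
      gcongr
      exact le_self_add

end Elimination

theorem exists_smul_mulVec_le_or_exists_le_mulVec {k : Type*} [TropSemifield k]
    (hto : TotallyOrderedTSF k) (hrat : RationalTSF k) {n : ℕ} (B : Matrix (Fin n) (Fin n) k) :
    (∃ (v : Fin n → k) (ε : k), (∀ i, v i ≠ 0) ∧ 1 < ε ∧ (ε • B) *ᵥ v ≤ v) ∨
      ∃ v : Fin n → k, v ≠ 0 ∧ v ≤ B *ᵥ v := by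
  have := hrat.nontrivial
  induction n with
  | zero =>
    obtain ⟨ε, hε⟩ := hrat.2 1
    exact Or.inl ⟨![], ε, finZeroElim, hε, finZeroElim⟩
  | succ n ih =>
    by_cases hlast : 1 ≤ B (Fin.last n) (Fin.last n)
    · refine Or.inr ⟨Pi.single (Fin.last n) 1, by simp, fun i => ?_⟩
      rw [mulVec_single_one]
      rcases eq_or_ne i (Fin.last n) with rfl | hi
      · simpa using hlast
      · simp [Pi.single_eq_of_ne hi]
    rcases ih (elimLast B) with ⟨v, ε', hv, hε', h⟩ | ⟨v, hv, h⟩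
    · obtain ⟨ε, hε, hεε', hεlast⟩ :=
        exists_one_lt_mul_self_le hto hrat hε' (hto.lt_of_not_ge hlast)
      obtain ⟨s, hs, hsv⟩ := exists_ne_zero_mul_le (fun i => ε * B i.castSucc (Fin.last n)) v hv
      refine Or.inl ⟨_, ε, fun i => ?_, hε, smul_mulVec_snoc_le hε.le hεε' hεlast hsv h⟩
      induction i using Fin.lastCases with
      | last => exact ne_bot_of_le_ne_bot hs (by rw [Fin.snoc_last]; exact le_self_add)
      | cast i => rw [Fin.snoc_castSucc]; exact hv i
    · refine Or.inr ⟨_, fun h0 => hv (funext fun i => ?_), le_mulVec_snoc_of_le_elimLast_mulVec h⟩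
      simpa using congrFun h0 i.castSucc

section DiagonalParts

variable {k : Type*} [TropSemifield k] {n : ℕ} (A : Matrix (Fin n) (Fin n) k)

theorem diagPart_add_offDiagPart : diagPart A + offDiagPart A = A := by
  ext i j
  by_cases h : i = j <;> simp [diagPart, offDiagPart, h]

theorem diagPart_eq_diagonal : diagPart A = diagonal fun i => A i i := by
  ext i j
  by_cases h : i = j
  · subst h; simp [diagPart]
  · simp [diagPart, diagonal, h]

variable {A}

theorem mulVec_eq_offDiagPart_mulVec {v : Fin n → k}
    (h : diagPart A *ᵥ v ≤ offDiagPart A *ᵥ v) : A *ᵥ v = offDiagPart A *ᵥ v := by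
  conv_lhs => rw [← diagPart_add_offDiagPart A]
  rw [add_mulVec, add_eq_right_iff_le.2 h]

theorem add_smul_offDiagPart_mulVec_eq {v : Fin n → k} {ε : k} (hε : 1 ≤ ε)
    (h : (ε • offDiagPart A) *ᵥ v ≤ diagPart A *ᵥ v) :
    (A + ε • offDiagPart A) *ᵥ v = diagPart A *ᵥ v := by
  have h_off : offDiagPart A *ᵥ v ≤ (ε • offDiagPart A) *ᵥ v := fun i => by
    rw [smul_mulVec]
    exact le_mul_of_one_le_left' hε
  nth_rw 1 [← diagPart_add_offDiagPart A]
  rw [add_mulVec, add_mulVec, add_assoc, add_eq_left_iff_le.2 (add_le (h_off.trans h) h)]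

theorem diagPart_mul_normalize (hA : ∀ i, A i i ≠ 0) :
    diagPart A * (diagonal (fun i => tinv (A i i)) * offDiagPart A) = offDiagPart A := by
  rw [diagPart_eq_diagonal, ← Matrix.mul_assoc, diagonal_mul_diagonal]
  simp [mul_tinv_cancel (hA _)]

end DiagonalParts

end Tropical

theorem stmt19 {k : Type*} [TropSemifield k]
    (hto : TotallyOrderedTSF k) (hrat : RationalTSF k)
    {n : ℕ} (A : Matrix (Fin n) (Fin n) k) :
    (∃ (v : Fin n → k) (ε : k), (∀ i, v i ≠ 0) ∧ tlt (1 : k) ε ∧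
        (A + ε • offDiagPart A).mulVec v = (diagPart A).mulVec v) ∨
    ∃ v : Fin n → k, v ≠ 0 ∧ A.mulVec v = (offDiagPart A).mulVec v := by
  let := TropSemifield.toIdemCommSemiring k
  have := hrat.nontrivial
  by_cases hA : ∃ i, A i i = 0
  · obtain ⟨i, hi⟩ := hA
    refine Or.inr ⟨Pi.single i 1, by simp, mulVec_eq_offDiagPart_mulVec ?_⟩
    intro j
    rw [diagPart_eq_diagonal, mulVec_diagonal]
    rcases eq_or_ne j i with rfl | hj
    · simp [hi]
    · simp [hj]
  push Not at hA
  set B := diagonal (fun i => tinv (A i i)) * offDiagPart A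
  have hB : ∀ w, diagPart A *ᵥ (B *ᵥ w) = offDiagPart A *ᵥ w := fun w => by
    rw [mulVec_mulVec, diagPart_mul_normalize hA]
  rcases exists_smul_mulVec_le_or_exists_le_mulVec hto hrat B with
    ⟨v, ε, hv, hε, hBv⟩ | ⟨v, hv, hBv⟩
  · refine Or.inl ⟨v, ε, hv, hε, add_smul_offDiagPart_mulVec_eq hε.le ?_⟩
    calc (ε • offDiagPart A) *ᵥ v = diagPart A *ᵥ ((ε • B) *ᵥ v) := by
          rw [smul_mulVec, smul_mulVec, mulVec_smul, hB]
      _ ≤ diagPart A *ᵥ v := mulVec_mono _ hBv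
  · exact Or.inr ⟨v, hv, mulVec_eq_offDiagPart_mulVec (hB v ▸ mulVec_mono _ hBv)⟩
end
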